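/- Let • ∈ {0, s, ss}, Q = (Q₁,…,Q_m) ∈ (K*)^m, q ∈ K* with q ≠ ±1, and suppose P_n^{(•)}(q², Q) ≠ 0. Then for any λ, μ ∈ P^{•,m}_n and standard tableaux t ∈ Std(λ), t' ∈ Std(μ) with t ≠ t', the sequences 𝚚(res(t)) and 𝚚(res(t')) are distinct. -/

import Mathlib

/-- A multipartition-like shape: `comps` components, each either strict
(shifted diagram) or an ordinary partition diagram.  A box is a triple
`(l, i, j)`: component `l`, row `i`, column `j` (all 0-indexed). -/
structure MultiShape where
  comps : ℕ
  isStrict : ℕ → Bool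
  part : ℕ → ℕ → ℕ

namespace MultiShape

/-- The set of boxes of the diagram of the shape.  In a strict component the
`i`-th row is shifted `i` steps to the right. -/
def cells (Λ : MultiShape) : Set (ℕ × ℕ × ℕ) :=
  {b | b.1 < Λ.comps ∧
    (if Λ.isStrict b.1 then
        b.2.1 ≤ b.2.2 ∧ b.2.2 < b.2.1 + Λ.part b.1 b.2.1
      else b.2.2 < Λ.part b.1 b.2.1)}

/-- `p : ℕ → ℕ` is a strict partition: weakly decreasing and strictly
decreasing on nonzero parts. -/
def IsStrictPartFun (p : ℕ → ℕ) : Prop :=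
  Antitone p ∧ ∀ i, p (i + 1) ≠ 0 → p (i + 1) < p i

/-- Well-formedness of a shape: strict components are strict partitions,
ordinary components are partitions, and everything beyond `comps` is
normalized to zero. -/
def WellFormed (Λ : MultiShape) : Prop :=
  (∀ l < Λ.comps, Λ.isStrict l = true → IsStrictPartFun (Λ.part l)) ∧
  (∀ l < Λ.comps, Λ.isStrict l = false → Antitone (Λ.part l)) ∧
  (∀ l, Λ.comps ≤ l → (Λ.part l = fun _ => 0) ∧ Λ.isStrict l = false)

/-- `t` is a standard tableau of shape `Λ` with entries `1,…,n`: a bijection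
from the boxes onto `{1,…,n}`, increasing along rows and columns of each
component, normalized to `0` outside the diagram. -/
def IsStd (Λ : MultiShape) (n : ℕ) (t : ℕ × ℕ × ℕ → ℕ) : Prop :=
  Set.BijOn t Λ.cells (Set.Icc 1 n) ∧
  (∀ b ∈ Λ.cells, ∀ b' ∈ Λ.cells,
      b.1 = b'.1 → b.2.1 = b'.2.1 → b.2.2 < b'.2.2 → t b < t b') ∧
  (∀ b ∈ Λ.cells, ∀ b' ∈ Λ.cells,
      b.1 = b'.1 → b.2.2 = b'.2.2 → b.2.1 < b'.2.1 → t b < t b') ∧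
  (∀ b, b ∉ Λ.cells → t b = 0)

/-- The simple transposition `s_k = (k, k+1)` acting on entries. -/
def sw (k : ℕ) : Equiv.Perm ℕ := Equiv.swap k (k + 1)

/-- The permutation `s_{i_k} ⋯ s_{i_1}` associated to the word `w = [i_1,…,i_k]`
(the first letter acts first). -/
def wordPerm (w : List ℕ) : Equiv.Perm ℕ :=
  w.foldl (fun σ k => sw k * σ) 1

end MultiShape

namespace MultiShape

/-- `𝚚(x) = 2(qx + (qx)⁻¹)/(q + q⁻¹)`. -/
def qval {K : Type} [Field K] (q x : K) : K := 2 * (q * x + (q * x)⁻¹) / (q + q⁻¹)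

/-- The cyclotomic parameter attached to component `l`, where `e ∈ {0,1,2}` is
the number of strict components: `Q₀ = Q_{0₊} = 1`, `Q_{0₋} = -1`, and the
remaining components carry `Q₁,…,Q_m` (0-indexed as `Q 0,…,Q (m-1)`). -/
def Qcomp {K : Type} [Field K] (e : ℕ) (Q : ℕ → K) : ℕ → K := fun l =>
  if e = 0 then Q l
  else if e = 1 then (if l = 0 then 1 else Q (l - 1))
  else if l = 0 then -1 else if l = 1 then 1 else Q (l - 2)

/-- The residue `res(i,j,l) = Q_l q^{2(j-i)}` of the box `b = (l,i,j)`. -/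
def resBox {K : Type} [Field K] (q : K) (Qf : ℕ → K) (b : ℕ × ℕ × ℕ) : K :=
  Qf b.1 * q ^ (2 * ((b.2.2 : ℤ) - (b.2.1 : ℤ)))

/-- `res_t(k)`: the residue of the box of `t` containing the entry `k`. -/
noncomputable def resAt {K : Type} [Field K] (q : K) (Qf : ℕ → K)
    (Λ : MultiShape) (t : ℕ × ℕ × ℕ → ℕ) (k : ℕ) : K :=
  resBox q Qf (Function.invFunOn t Λ.cells k)

/-- `Λ` encodes a shape in `P^{•,m}`, where `e ∈ {0,1,2}` is the number of
strict components corresponding to `• ∈ {0, s, ss}`. -/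
def IsShape (Λ : MultiShape) (e m : ℕ) : Prop :=
  Λ.comps = e + m ∧ (∀ l, Λ.isStrict l = decide (l < e)) ∧ Λ.WellFormed

end MultiShape

/-
If `𝚚(res(t)) = 𝚚(res(t'))`, look at the least entry `j + 1` whose boxes `b` (in `t`) and `b'`
(in `t'`) differ. The boxes of `1, …, j` coincide, so `b` and `b'` are two distinct addable boxes
of one common diagram; entering `j + 1` in `b` and `j + 2` in `b'` gives a standard tableau, and
padding it with `n - j - 1` boxes at the end of the first row makes a standard tableau `T` of
size `n + 1` on a shape of the same type. Separateness of `T` gives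
`𝚚(res b) = 𝚚(res_T(j + 1)) ≠ 𝚚(res_T(j + 2)) = 𝚚(res b')`, contradicting the assumption at `j + 1`.
-/

namespace MultiShape

open Function Set

variable {Λ M : MultiShape} {n p : ℕ} {t t' : ℕ × ℕ × ℕ → ℕ}

/-- The column of the first box of row `i` of component `l`. -/
def offs (Λ : MultiShape) (l i : ℕ) : ℕ := if Λ.isStrict l then i else 0

section cells

variable {l i j : ℕ}

theorem mem_cells_iff :
    (l, i, j) ∈ Λ.cells ↔ l < Λ.comps ∧ offs Λ l i ≤ j ∧ j < offs Λ l i + Λ.part l i := by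
  cases h : Λ.isStrict l <;> simp [cells, offs, h]

theorem mem_cells_iff_of_isStrict (hs : Λ.isStrict l = true) :
    (l, i, j) ∈ Λ.cells ↔ l < Λ.comps ∧ i ≤ j ∧ j < i + Λ.part l i := by
  simp [cells, hs]

theorem mem_cells_iff_of_not_isStrict (hs : Λ.isStrict l = false) :
    (l, i, j) ∈ Λ.cells ↔ l < Λ.comps ∧ j < Λ.part l i := by
  simp [cells, hs]

end cells

def IsUpClosed (S : Set (ℕ × ℕ × ℕ)) : Prop := ∀ l i j, (l, i + 1, j) ∈ S → (l, i, j) ∈ S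

theorem IsUpClosed.union {S S' : Set (ℕ × ℕ × ℕ)} (hS : IsUpClosed S) (hS' : IsUpClosed S') :
    IsUpClosed (S ∪ S') :=
  fun l i j h => h.imp (hS l i j) (hS' l i j)

theorem IsUpClosed.mem_of_le {S : Set (ℕ × ℕ × ℕ)} (hS : IsUpClosed S) {l i i' j : ℕ}
    (h : (l, i', j) ∈ S) (hi : i ≤ i') : (l, i, j) ∈ S := by
  obtain ⟨d, rfl⟩ := Nat.exists_eq_add_of_le hi
  induction d with
  | zero => exact h
  | succ d ih => exact ih (hS l (i + d) j h) (by omega)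

theorem wellFormed_iff : Λ.WellFormed ↔ IsUpClosed Λ.cells ∧
    ∀ l, Λ.comps ≤ l → (Λ.part l = fun _ => 0) ∧ Λ.isStrict l = false := by
  refine and_assoc.symm.trans (and_congr_left' ⟨?_, fun hup => ⟨?_, ?_⟩⟩)
  · rintro ⟨hstrict, hord⟩ l i j h
    cases hs : Λ.isStrict l
    · rw [mem_cells_iff_of_not_isStrict hs] at h ⊢
      exact ⟨h.1, h.2.trans_le (hord l h.1 hs (Nat.le_add_right i 1))⟩
    · rw [mem_cells_iff_of_isStrict hs] at h ⊢
      have := (hstrict l h.1 hs).2 i (by omega)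
      exact ⟨h.1, by omega, by omega⟩
  · intro l hl hs
    have hlt : ∀ i, Λ.part l (i + 1) ≠ 0 → Λ.part l (i + 1) < Λ.part l i := fun i hi => by
      have := (mem_cells_iff_of_isStrict hs).1 (hup l i (i + Λ.part l (i + 1))
        ((mem_cells_iff_of_isStrict hs).2 ⟨hl, by omega, by omega⟩))
      omega
    refine ⟨antitone_nat_of_succ_le fun i => ?_, hlt⟩
    by_cases h0 : Λ.part l (i + 1) = 0
    · omega
    · exact (hlt i h0).le
  · intro l hl hs
    refine antitone_nat_of_succ_le fun i => ?_
    by_cases h0 : Λ.part l (i + 1) = 0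
    · omega
    · have := (mem_cells_iff_of_not_isStrict hs).1 (hup l i (Λ.part l (i + 1) - 1)
        ((mem_cells_iff_of_not_isStrict hs).2 ⟨hl, by omega⟩))
      omega

theorem WellFormed.isUpClosed (hW : Λ.WellFormed) : IsUpClosed Λ.cells :=
  (wellFormed_iff.1 hW).1

theorem WellFormed.col_lt_part_zero (hW : Λ.WellFormed) {c : ℕ × ℕ × ℕ}
    (hc : c ∈ Λ.cells) : c.2.2 < Λ.part c.1 0 := by
  have := mem_cells_iff.1 (hW.isUpClosed.mem_of_le hc (Nat.zero_le c.2.1))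
  simpa [offs] using this.2.2

theorem eq_range_card_of_isLowerSet {F : Finset ℕ} (hF : IsLowerSet (F : Set ℕ)) :
    F = Finset.range F.card := by
  rcases hF.eq_univ_or_Iio with h | ⟨a, h⟩
  · exact absurd (h ▸ F.finite_toSet) infinite_univ
  · have hFa : F = Finset.range a := by
      ext j
      rw [← Finset.mem_coe, h, Finset.mem_range, mem_Iio]
    rw [hFa, Finset.card_range]

open scoped Classical in
noncomputable def restrict (Λ : MultiShape) (S : Set (ℕ × ℕ × ℕ)) : MultiShape where
  comps := Λ.comps
  isStrict := Λ.isStrict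
  part l i := ((Finset.range (Λ.part l i)).filter fun j => (l, i, offs Λ l i + j) ∈ S).card

def sup (Λ M : MultiShape) : MultiShape where
  comps := Λ.comps
  isStrict := Λ.isStrict
  part l i := max (Λ.part l i) (M.part l i)

def rowSegment (L s d : ℕ) : Set (ℕ × ℕ × ℕ) :=
  {c | c.1 = L ∧ c.2.1 = 0 ∧ s ≤ c.2.2 ∧ c.2.2 < s + d}

def growRow (Λ : MultiShape) (L D : ℕ) : MultiShape where
  comps := Λ.comps
  isStrict := Λ.isStrict
  part l i := Λ.part l i + if l = L ∧ i = 0 then D else 0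

theorem cells_restrict {S : Set (ℕ × ℕ × ℕ)} (hS : S ⊆ Λ.cells)
    (hleft : ∀ l i j j', (l, i, j) ∈ S → offs Λ l i ≤ j' → j' ≤ j → (l, i, j') ∈ S) :
    (Λ.restrict S).cells = S := by
  classical
  ext ⟨l, i, j⟩
  set F := (Finset.range (Λ.part l i)).filter fun j => (l, i, offs Λ l i + j) ∈ S
  have hF : F = Finset.range F.card := eq_range_card_of_isLowerSet fun a b hba ha => by
    simp only [F, Finset.coe_filter, Finset.mem_range, mem_ofPred_eq] at ha ⊢
    exact ⟨by omega, hleft _ _ _ _ ha.2 (by omega) (by omega)⟩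
  rw [mem_cells_iff]
  change l < Λ.comps ∧ offs Λ l i ≤ j ∧ j < offs Λ l i + F.card ↔ _
  constructor
  · rintro ⟨-, hoj, hj⟩
    have hmem : j - offs Λ l i ∈ F := by
      rw [hF, Finset.mem_range]
      omega
    rw [Finset.mem_filter, Nat.add_sub_cancel' hoj] at hmem
    exact hmem.2
  · intro h
    obtain ⟨hl, hoj, hj⟩ := mem_cells_iff.1 (hS h)
    have hmem : j - offs Λ l i ∈ F := by
      rw [Finset.mem_filter, Nat.add_sub_cancel' hoj, Finset.mem_range]
      exact ⟨by omega, h⟩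
    rw [hF, Finset.mem_range] at hmem
    exact ⟨hl, hoj, by omega⟩

theorem WellFormed.restrict (hW : Λ.WellFormed) {S : Set (ℕ × ℕ × ℕ)} (hS : S ⊆ Λ.cells)
    (hleft : ∀ l i j j', (l, i, j) ∈ S → offs Λ l i ≤ j' → j' ≤ j → (l, i, j') ∈ S)
    (hup : IsUpClosed S) : (Λ.restrict S).WellFormed := by
  rw [wellFormed_iff, cells_restrict hS hleft]
  refine ⟨hup, fun l hl => ⟨?_, (hW.2.2 l hl).2⟩⟩
  funext i
  simp [MultiShape.restrict, (hW.2.2 l hl).1]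

theorem cells_sup (hc : M.comps = Λ.comps) (hs : M.isStrict = Λ.isStrict) :
    (Λ.sup M).cells = Λ.cells ∪ M.cells := by
  ext ⟨l, i, j⟩
  have ho : offs M l i = offs Λ l i := by simp [offs, hs]
  simp only [mem_union, mem_cells_iff, ho, hc]
  change l < Λ.comps ∧ offs Λ l i ≤ j ∧ j < offs Λ l i + max (Λ.part l i) (M.part l i) ↔ _
  omega

theorem WellFormed.sup (hΛ : Λ.WellFormed) (hM : M.WellFormed) (hc : M.comps = Λ.comps)
    (hs : M.isStrict = Λ.isStrict) : (Λ.sup M).WellFormed := by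
  rw [wellFormed_iff, cells_sup hc hs]
  refine ⟨hΛ.isUpClosed.union hM.isUpClosed, fun l hl => ⟨?_, (hΛ.2.2 l hl).2⟩⟩
  funext i
  simp [MultiShape.sup, (hΛ.2.2 l hl).1, (hM.2.2 l (hc ▸ hl)).1]

theorem cells_growRow {L D : ℕ} (hL : L < Λ.comps) :
    (Λ.growRow L D).cells = Λ.cells ∪ rowSegment L (Λ.part L 0) D := by
  ext ⟨l, i, j⟩
  simp only [mem_union, mem_cells_iff, rowSegment, mem_ofPred_eq]
  change l < Λ.comps ∧ offs Λ l i ≤ j ∧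
    j < offs Λ l i + (Λ.part l i + if l = L ∧ i = 0 then D else 0) ↔ _
  by_cases h : l = L ∧ i = 0
  · obtain ⟨rfl, rfl⟩ := h
    rw [if_pos ⟨rfl, rfl⟩]
    simp only [offs, ite_self, true_and]
    omega
  · simp only [h, if_false, add_zero]
    tauto

theorem WellFormed.growRow (hW : Λ.WellFormed) {L D : ℕ} (hL : L < Λ.comps) :
    (Λ.growRow L D).WellFormed := by
  rw [wellFormed_iff, cells_growRow hL]
  refine ⟨hW.isUpClosed.union fun l i j h => absurd h.2.1 (Nat.succ_ne_zero i),
    fun l hl => ⟨?_, (hW.2.2 l hl).2⟩⟩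
  funext i
  have hlL : l ≠ L := by rintro rfl; exact absurd hl (not_le.2 hL)
  simp [MultiShape.growRow, (hW.2.2 l hl).1, hlL]

def IsStdOn (S : Set (ℕ × ℕ × ℕ)) (N : ℕ) (T : ℕ × ℕ × ℕ → ℕ) : Prop :=
  BijOn T S (Icc 1 N) ∧
  (∀ b ∈ S, ∀ b' ∈ S, b.1 = b'.1 → b.2.1 = b'.2.1 → b.2.2 < b'.2.2 → T b < T b') ∧
  (∀ b ∈ S, ∀ b' ∈ S, b.1 = b'.1 → b.2.2 = b'.2.2 → b.2.1 < b'.2.1 → T b < T b') ∧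
  (∀ b, b ∉ S → T b = 0)

theorem isStd_iff_isStdOn :
    Λ.IsStd n t ↔ IsStdOn Λ.cells n t := Iff.rfl

namespace IsStdOn

variable {S : Set (ℕ × ℕ × ℕ)} {N : ℕ} {T : ℕ × ℕ × ℕ → ℕ}

theorem finite_and_ncard_eq (hT : IsStdOn S N T) : S.Finite ∧ S.ncard = N := by
  refine ⟨hT.1.finite_iff_finite.2 (finite_Icc 1 N), ?_⟩
  rw [hT.1.ncard_eq, ncard_Icc_nat]
  omega

theorem invFunOn_eq (hT : IsStdOn S N T) {c : ℕ × ℕ × ℕ} (hc : c ∈ S) {k : ℕ} (hk : T c = k) :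
    invFunOn T S k = c :=
  hk ▸ hT.1.invOn_invFunOn.1 hc

theorem insert_corner (hT : IsStdOn S N T) {c : ℕ × ℕ × ℕ} (hc : c ∉ S)
    (hrow : ∀ x ∈ S, x.1 = c.1 → x.2.1 = c.2.1 → x.2.2 < c.2.2)
    (hcol : ∀ x ∈ S, x.1 = c.1 → x.2.2 = c.2.2 → x.2.1 < c.2.1) :
    IsStdOn (insert c S) (N + 1) (update T c (N + 1)) := by
  have hne : ∀ x ∈ S, x ≠ c := fun x hx h => hc (h ▸ hx)
  have hlt : ∀ x ∈ S, update T c (N + 1) x < update T c (N + 1) c := fun x hx => by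
    rw [update_of_ne (hne x hx), update_self]
    exact Nat.lt_succ_of_le (hT.1.mapsTo hx).2
  refine ⟨?_, ?_, ?_, ?_⟩
  · have hbij : BijOn (update T c (N + 1)) S (Icc 1 N) :=
      hT.1.congr fun x hx => (update_of_ne (hne x hx) _ _).symm
    rw [← insert_Icc_right_eq_Icc_add_one (by omega)]
    simpa using hbij.insert (a := c) (by simp)
  · rintro x (rfl | hx) y (rfl | hy) h1 h2 h3
    · omega
    · exact absurd (hrow y hy h1.symm h2.symm) (by omega)
    · exact hlt x hx
    · rw [update_of_ne (hne x hx), update_of_ne (hne y hy)]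
      exact hT.2.1 x hx y hy h1 h2 h3
  · rintro x (rfl | hx) y (rfl | hy) h1 h2 h3
    · omega
    · exact absurd (hcol y hy h1.symm h2.symm) (by omega)
    · exact hlt x hx
    · rw [update_of_ne (hne x hx), update_of_ne (hne y hy)]
      exact hT.2.2.1 x hx y hy h1 h2 h3
  · intro x hx
    rw [mem_insert_iff, not_or] at hx
    rw [update_of_ne hx.1]
    exact hT.2.2.2 x hx.2

end IsStdOn

def extendRow (T : ℕ × ℕ × ℕ → ℕ) (L s N : ℕ) : ℕ → ℕ × ℕ × ℕ → ℕ
  | 0 => T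
  | d + 1 => update (extendRow T L s N d) (L, 0, s + d) (N + d + 1)

theorem extendRow_apply {T : ℕ × ℕ × ℕ → ℕ} {L s N : ℕ} {c : ℕ × ℕ × ℕ}
    (hc : c.1 = L → c.2.2 < s) (d : ℕ) : extendRow T L s N d c = T c := by
  induction d with
  | zero => rfl
  | succ d ih =>
    rw [extendRow, update_of_ne (by rintro rfl; simp at hc), ih]

theorem IsStdOn.extendRow {S : Set (ℕ × ℕ × ℕ)} {N : ℕ} {T : ℕ × ℕ × ℕ → ℕ} {L s : ℕ}
    (hT : IsStdOn S N T) (hS : ∀ x ∈ S, x.1 = L → x.2.2 < s) (d : ℕ) :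
    IsStdOn (S ∪ rowSegment L s d) (N + d) (extendRow T L s N d) := by
  induction d with
  | zero =>
    have hempty : rowSegment L s 0 = ∅ := by
      ext c
      simp only [rowSegment, mem_ofPred_eq, mem_empty_iff_false, iff_false]
      omega
    rw [hempty, union_empty]
    exact hT
  | succ d ih =>
    have hseg : rowSegment L s (d + 1) = insert (L, 0, s + d) (rowSegment L s d) := by
      ext ⟨l, i, j⟩
      simp only [rowSegment, mem_insert_iff, mem_ofPred_eq, Prod.mk.injEq]
      omega
    have hbound : ∀ x ∈ S ∪ rowSegment L s d, x.1 = L → x.2.2 < s + d := by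
      rintro x (hx | ⟨-, -, -, hx⟩) hL
      · have := hS x hx hL
        omega
      · exact hx
    rw [hseg, union_insert, ← add_assoc]
    refine ih.insert_corner (fun h => (hbound _ h rfl).false) (fun x hx hL _ => hbound x hx hL)
      (fun x hx hL hcol => absurd (hbound x hx hL) (by simp [hcol]))

def lowerCells (Λ : MultiShape) (t : ℕ × ℕ × ℕ → ℕ) (p : ℕ) : Set (ℕ × ℕ × ℕ) :=
  {c ∈ Λ.cells | t c ≤ p}

theorem lowerCells_subset (Λ : MultiShape) (t : ℕ × ℕ × ℕ → ℕ) (p : ℕ) :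
    Λ.lowerCells t p ⊆ Λ.cells :=
  sep_subset _ _

namespace IsStd

theorem lowerCells_zero (ht : Λ.IsStd n t) : Λ.lowerCells t 0 = ∅ :=
  eq_empty_of_forall_notMem fun c hc => by
    have := (ht.1.mapsTo hc.1).1
    have := hc.2
    omega

theorem lowerCells_succ (ht : Λ.IsStd n t) (hp : p + 1 ≤ n) :
    Λ.lowerCells t (p + 1) = insert (invFunOn t Λ.cells (p + 1)) (Λ.lowerCells t p) := by
  have hk : p + 1 ∈ Icc 1 n := ⟨by omega, hp⟩
  have hmem := ht.1.surjOn.mapsTo_invFunOn hk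
  have happ : t (invFunOn t Λ.cells (p + 1)) = p + 1 := ht.1.invOn_invFunOn.2 hk
  ext c
  simp only [lowerCells, mem_insert_iff, mem_sep_iff]
  constructor
  · rintro ⟨hc, hcp⟩
    rcases Nat.lt_or_ge p (t c) with h | h
    · left
      rw [← show t c = p + 1 by omega]
      exact (ht.1.invOn_invFunOn.1 hc).symm
    · exact Or.inr ⟨hc, h⟩
  · rintro (rfl | ⟨hc, hcp⟩)
    · exact ⟨hmem, happ.le⟩
    · exact ⟨hc, by omega⟩

theorem isStdOn_lowerCells (ht : Λ.IsStd n t) (hp : p ≤ n) :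
    IsStdOn (Λ.lowerCells t p) p ((Λ.lowerCells t p).indicator t) := by
  have heq : EqOn t ((Λ.lowerCells t p).indicator t) (Λ.lowerCells t p) :=
    fun c hc => (indicator_of_mem hc t).symm
  refine ⟨BijOn.congr ⟨fun c hc => ⟨(ht.1.mapsTo hc.1).1, hc.2⟩,
      ht.1.injOn.mono (sep_subset _ _), fun k hk => ?_⟩ heq, ?_, ?_,
      fun c hc => indicator_of_notMem hc t⟩
  · obtain ⟨c, hc, rfl⟩ := ht.1.surjOn (⟨hk.1, hk.2.trans hp⟩ : k ∈ Icc 1 n)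
    exact ⟨c, ⟨hc, hk.2⟩, rfl⟩
  · intro b hb b' hb' h1 h2 h3
    rw [← heq hb, ← heq hb']
    exact ht.2.1 b hb.1 b' hb'.1 h1 h2 h3
  · intro b hb b' hb' h1 h2 h3
    rw [← heq hb, ← heq hb']
    exact ht.2.2.1 b hb.1 b' hb'.1 h1 h2 h3

theorem mem_lowerCells_of_le (ht : Λ.IsStd n t) {l i j j' : ℕ}
    (h : (l, i, j) ∈ Λ.lowerCells t p) (hj' : offs Λ l i ≤ j') (hjj : j' ≤ j) :
    (l, i, j') ∈ Λ.lowerCells t p := by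
  have hc := mem_cells_iff.1 h.1
  have hc' : (l, i, j') ∈ Λ.cells := mem_cells_iff.2 ⟨hc.1, hj', by omega⟩
  rcases hjj.eq_or_lt with rfl | hlt
  · exact h
  · exact ⟨hc', (ht.2.1 _ hc' _ h.1 rfl rfl hlt).le.trans h.2⟩

theorem isUpClosed_lowerCells (hW : Λ.WellFormed) (ht : Λ.IsStd n t) :
    IsUpClosed (Λ.lowerCells t p) := fun l i j h =>
  have hc := hW.isUpClosed l i j h.1
  ⟨hc, (ht.2.2.1 _ hc _ h.1 rfl rfl (Nat.lt_succ_self i)).le.trans h.2⟩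

theorem eq_of_lowerCells_eq (ht : Λ.IsStd n t) (ht' : M.IsStd n t')
    (h : ∀ p ≤ n, Λ.lowerCells t p = M.lowerCells t' p) : t = t' := by
  have key : ∀ {Λ M : MultiShape} {t t' : ℕ × ℕ × ℕ → ℕ}, Λ.IsStd n t →
      (∀ p ≤ n, Λ.lowerCells t p = M.lowerCells t' p) →
      ∀ c ∈ Λ.cells, c ∈ M.cells ∧ t' c ≤ t c := by
    intro Λ M t t' ht h c hc
    exact (h (t c) (ht.1.mapsTo hc).2 ▸ ⟨hc, le_rfl⟩ : c ∈ M.lowerCells t' (t c))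
  funext c
  by_cases hc : c ∈ Λ.cells
  · obtain ⟨hc', hle⟩ := key ht h c hc
    exact hle.antisymm' (key ht' (fun p hp => (h p hp).symm) c hc').2
  · have hc' : c ∉ M.cells := fun hc' => hc (key ht' (fun p hp => (h p hp).symm) c hc').1
    rw [ht.2.2.2 c hc, ht'.2.2.2 c hc']

theorem isStdOn_insert_lowerCells (hW : Λ.WellFormed) (ht : Λ.IsStd n t) (hp : p ≤ n)
    {c : ℕ × ℕ × ℕ} (hc : c ∉ Λ.lowerCells t p) (hoffs : offs Λ c.1 c.2.1 ≤ c.2.2) :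
    IsStdOn (insert c (Λ.lowerCells t p)) (p + 1)
      (update ((Λ.lowerCells t p).indicator t) c (p + 1)) := by
  refine (ht.isStdOn_lowerCells hp).insert_corner hc (fun x hx h1 h2 => ?_) fun x hx h1 h2 => ?_
  · refine lt_of_not_ge fun h => hc ?_
    have := ht.mem_lowerCells_of_le (j' := c.2.2) hx (h1 ▸ h2 ▸ hoffs) h
    rwa [h1, h2] at this
  · refine lt_of_not_ge fun h => hc ?_
    have := (ht.isUpClosed_lowerCells hW).mem_of_le hx h
    rwa [h1, h2] at this

theorem cells_restrict_lowerCells (ht : Λ.IsStd n t) :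
    (Λ.restrict (Λ.lowerCells t p)).cells = Λ.lowerCells t p :=
  cells_restrict (lowerCells_subset _ _ _) fun _ _ _ _ => ht.mem_lowerCells_of_le

theorem wellFormed_restrict_lowerCells (hW : Λ.WellFormed) (ht : Λ.IsStd n t) :
    (Λ.restrict (Λ.lowerCells t p)).WellFormed :=
  hW.restrict (lowerCells_subset _ _ _) (fun _ _ _ _ => ht.mem_lowerCells_of_le)
    (ht.isUpClosed_lowerCells hW)

end IsStd

theorem IsStd.exists_lowerCells_eq_and_invFunOn_ne (ht : Λ.IsStd n t) (ht' : M.IsStd n t')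
    (hne : t ≠ t') : ∃ j, j + 1 ≤ n ∧ Λ.lowerCells t j = M.lowerCells t' j ∧
      invFunOn t Λ.cells (j + 1) ≠ invFunOn t' M.cells (j + 1) := by
  by_contra! h
  refine hne (ht.eq_of_lowerCells_eq ht' fun p hp => ?_)
  induction p with
  | zero => rw [ht.lowerCells_zero, ht'.lowerCells_zero]
  | succ p ih =>
    have hν := ih (by omega)
    rw [ht.lowerCells_succ hp, ht'.lowerCells_succ hp, hν, h p hp hν]

theorem exists_isStd_merge (hΛ : Λ.WellFormed) (hM : M.WellFormed) (hc : M.comps = Λ.comps)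
    (hs : M.isStrict = Λ.isStrict) (ht : Λ.IsStd n t) (ht' : M.IsStd n t') {j : ℕ}
    (hj : j + 1 ≤ n) (hν : Λ.lowerCells t j = M.lowerCells t' j)
    (hb : invFunOn t Λ.cells (j + 1) ≠ invFunOn t' M.cells (j + 1)) :
    ∃ (Ξ : MultiShape) (T : ℕ × ℕ × ℕ → ℕ), Ξ.comps = Λ.comps ∧ Ξ.isStrict = Λ.isStrict ∧
      Ξ.WellFormed ∧ Ξ.IsStd (j + 2) T ∧
      invFunOn T Ξ.cells (j + 1) = invFunOn t Λ.cells (j + 1) ∧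
      invFunOn T Ξ.cells (j + 2) = invFunOn t' M.cells (j + 1) := by
  set b := invFunOn t Λ.cells (j + 1)
  set b' := invFunOn t' M.cells (j + 1)
  have hk : j + 1 ∈ Icc 1 n := ⟨by omega, hj⟩
  have hS : Λ.lowerCells t (j + 1) = insert b (Λ.lowerCells t j) := ht.lowerCells_succ hj
  have hS' : M.lowerCells t' (j + 1) = insert b' (Λ.lowerCells t j) :=
    hν ▸ ht'.lowerCells_succ hj
  have hb'S : b' ∉ Λ.lowerCells t (j + 1) := by
    rw [hS, hν]
    rintro (h | h)
    · exact hb h.symm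
    · have := h.2
      rw [ht'.1.invOn_invFunOn.2 hk] at this
      omega
  have hoffs : offs Λ b'.1 b'.2.1 ≤ b'.2.2 := by
    have := (mem_cells_iff.1 (ht'.1.surjOn.mapsTo_invFunOn hk : b' ∈ M.cells)).2.1
    rwa [offs, hs] at this
  have hT := ht.isStdOn_insert_lowerCells hΛ hj hb'S hoffs
  have hcells : ((Λ.restrict (Λ.lowerCells t (j + 1))).sup
      (M.restrict (M.lowerCells t' (j + 1)))).cells = insert b' (Λ.lowerCells t (j + 1)) := by
    rw [cells_sup (Λ := Λ.restrict _) (M := M.restrict _) hc hs, ht.cells_restrict_lowerCells,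
      ht'.cells_restrict_lowerCells, hS', hS]
    ext c
    simp only [mem_union, mem_insert_iff]
    tauto
  rw [← hcells] at hT
  have hTb : update ((Λ.lowerCells t (j + 1)).indicator t) b' (j + 1 + 1) b = j + 1 := by
    rw [update_of_ne hb, indicator_of_mem (hS ▸ mem_insert _ _ : b ∈ Λ.lowerCells t (j + 1))]
    exact ht.1.invOn_invFunOn.2 hk
  refine ⟨(Λ.restrict (Λ.lowerCells t (j + 1))).sup (M.restrict (M.lowerCells t' (j + 1))), _,
    rfl, rfl, (ht.wellFormed_restrict_lowerCells hΛ).sup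
    (ht'.wellFormed_restrict_lowerCells hM) hc hs, isStd_iff_isStdOn.2 hT, ?_, ?_⟩
  · exact hT.invFunOn_eq (hcells ▸ mem_insert_of_mem _ (hS ▸ mem_insert _ _)) hTb
  · exact hT.invFunOn_eq (hcells ▸ mem_insert _ _) (update_self _ _ _)

theorem WellFormed.exists_isStd_pad {Ξ₀ : MultiShape} {N : ℕ} {T₀ : ℕ × ℕ × ℕ → ℕ}
    (hW : Ξ₀.WellFormed) (hT : Ξ₀.IsStd N T₀) (hN : 0 < N) (D : ℕ) :
    ∃ (Ξ : MultiShape) (T : ℕ × ℕ × ℕ → ℕ), Ξ.comps = Ξ₀.comps ∧ Ξ.isStrict = Ξ₀.isStrict ∧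
      Ξ.WellFormed ∧ Ξ.IsStd (N + D) T ∧
      ∀ k ∈ Icc 1 N, invFunOn T Ξ.cells k = invFunOn T₀ Ξ₀.cells k := by
  have hcomps : 0 < Ξ₀.comps :=
    Nat.zero_lt_of_lt (hT.1.surjOn.mapsTo_invFunOn (⟨le_rfl, hN⟩ : 1 ∈ Icc 1 N)).1
  have hS : ∀ x ∈ Ξ₀.cells, x.1 = 0 → x.2.2 < Ξ₀.part 0 0 :=
    fun x hx h => h ▸ hW.col_lt_part_zero hx
  have hT' := (isStd_iff_isStdOn.1 hT).extendRow hS D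
  rw [← cells_growRow hcomps] at hT'
  refine ⟨Ξ₀.growRow 0 D, _, rfl, rfl, hW.growRow hcomps, hT', fun k hk => ?_⟩
  have hc := hT.1.surjOn.mapsTo_invFunOn hk
  refine hT'.invFunOn_eq ?_ ?_
  · rw [cells_growRow hcomps]
    exact Or.inl hc
  · rw [extendRow_apply fun h => h ▸ hW.col_lt_part_zero hc]
    exact hT.1.invOn_invFunOn.2 hk

end MultiShape

open MultiShape in
theorem stmt17_general (K : Type) [Field K]
    (q : K) (e m : ℕ) (Q : ℕ → K) (n : ℕ)
    (hsep : ∀ Λ' : MultiShape, IsShape Λ' e m → Λ'.cells.Finite →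
      Λ'.cells.ncard = n + 1 → ∀ t' : ℕ × ℕ × ℕ → ℕ, Λ'.IsStd (n + 1) t' →
      ∀ k, 1 ≤ k → k ≤ n →
        qval q (resAt q (Qcomp e Q) Λ' t' k) ≠
          qval q (resAt q (Qcomp e Q) Λ' t' (k + 1)))
    (Λ M : MultiShape) (hΛ : IsShape Λ e m) (hM : IsShape M e m)
    (t t' : ℕ × ℕ × ℕ → ℕ) (ht : Λ.IsStd n t) (ht' : M.IsStd n t')
    (hne : t ≠ t') :
    ∃ k, 1 ≤ k ∧ k ≤ n ∧
      qval q (resAt q (Qcomp e Q) Λ t k) ≠ qval q (resAt q (Qcomp e Q) M t' k) := by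
  by_contra! hcon
  obtain ⟨j, hj, hν, hb⟩ := ht.exists_lowerCells_eq_and_invFunOn_ne ht' hne
  obtain ⟨Ξ₀, T₀, hc₀, hs₀, hW₀, hT₀, hb₀, hb₀'⟩ := exists_isStd_merge hΛ.2.2 hM.2.2
    (hM.1.trans hΛ.1.symm) (funext fun l => (hM.2.1 l).trans (hΛ.2.1 l).symm) ht ht' hj hν hb
  obtain ⟨Ξ, T, hc, hs, hW, hT, hinv⟩ := hW₀.exists_isStd_pad hT₀ (by omega) (n - (j + 1))
  rw [show j + 2 + (n - (j + 1)) = n + 1 by omega] at hT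
  have hΞ : IsShape Ξ e m := ⟨hc.trans (hc₀.trans hΛ.1), fun l => by rw [hs, hs₀, hΛ.2.1], hW⟩
  obtain ⟨hfin, hcard⟩ := (isStd_iff_isStdOn.1 hT).finite_and_ncard_eq
  refine hsep Ξ hΞ hfin hcard T hT (j + 1) (by omega) hj ?_
  simp only [resAt]
  rw [hinv (j + 1) ⟨by omega, by omega⟩, hinv (j + 2) ⟨by omega, le_rfl⟩, hb₀, hb₀']
  exact hcon (j + 1) (by omega) hj

open MultiShape in
/-- Under the separateness condition `P_n^{(•)}(q², Q) ≠ 0` (equivalently,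
`(q,Q)` is separate with respect to every shape in `P^{•,m}_{n+1}`), distinct
standard tableaux `t ∈ Std(λ)`, `t' ∈ Std(μ)` with `λ, μ ∈ P^{•,m}_n` have
distinct sequences `𝚚(res(t)) ≠ 𝚚(res(t'))`. -/
theorem stmt17 (K : Type) [Field K] [IsAlgClosed K] (hchar : ringChar K ≠ 2)
    (q : K) (hq0 : q ≠ 0) (hq1 : q ≠ 1) (hqm1 : q ≠ -1)
    (e m : ℕ) (he : e ≤ 2) (Q : ℕ → K) (hQ : ∀ i < m, Q i ≠ 0) (n : ℕ)
    (hsep : ∀ Λ' : MultiShape, IsShape Λ' e m → Λ'.cells.Finite →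
      Λ'.cells.ncard = n + 1 → ∀ t' : ℕ × ℕ × ℕ → ℕ, Λ'.IsStd (n + 1) t' →
      ∀ k, 1 ≤ k → k ≤ n →
        qval q (resAt q (Qcomp e Q) Λ' t' k) ≠
          qval q (resAt q (Qcomp e Q) Λ' t' (k + 1)))
    (Λ M : MultiShape) (hΛ : IsShape Λ e m) (hM : IsShape M e m)
    (hfΛ : Λ.cells.Finite) (hnΛ : Λ.cells.ncard = n)
    (hfM : M.cells.Finite) (hnM : M.cells.ncard = n)
    (t t' : ℕ × ℕ × ℕ → ℕ) (ht : Λ.IsStd n t) (ht' : M.IsStd n t')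
    (hne : t ≠ t') :
    ∃ k, 1 ≤ k ∧ k ≤ n ∧
      qval q (resAt q (Qcomp e Q) Λ t k) ≠ qval q (resAt q (Qcomp e Q) M t' k) :=
  stmt17_general K q e m Q n hsep Λ M hΛ hM t t' ht ht' hne
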